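/- Let M ∈ ℕ, let M_v and M_p be symmetric real M × M matrices, let R be a real M × M matrix, let f : ℝ → ℝᴹ, and let v, p : ℝ → ℝᴹ be functions differentiable at a time t with derivatives v'(t) and p'(t) satisfying M_v · v'(t) = R · p(t) and M_p · p'(t) = f(t) − Rᵀ · v(t). Then the discrete energy function t ↦ v(t)ᵀ M_v v(t) + p(t)ᵀ M_p p(t) is differentiable at t with derivative equal to 2 · p(t)ᵀ f(t). -/

import Mathlib

/-!
By symmetry of the mass matrices the energy has derivative `2 vᵀ M_v v' + 2 pᵀ M_p p'`.
Substituting the two equations turns this into `2 vᵀ R p + 2 pᵀ f - 2 pᵀ Rᵀ v`, and the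
coupling terms cancel because `pᵀ Rᵀ v = vᵀ R p`.
-/

open Matrix

theorem Matrix.IsSymm.dotProduct_mulVec_comm {α n : Type*} [CommSemiring α] [Fintype n]
    {A : Matrix n n α} (hA : A.IsSymm) (x y : n → α) : x ⬝ᵥ A *ᵥ y = y ⬝ᵥ A *ᵥ x := by
  rw [← dotProduct_transpose_mulVec, hA.eq]

section Calculus

variable {𝕜 m n : Type*} [NontriviallyNormedField 𝕜] [Fintype n]
  {x y : 𝕜 → n → 𝕜} {x' y' : n → 𝕜} {t : 𝕜}

theorem HasDerivAt.dotProduct (hx : HasDerivAt x x' t) (hy : HasDerivAt y y' t) :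
    HasDerivAt (fun s => x s ⬝ᵥ y s) (x' ⬝ᵥ y t + x t ⬝ᵥ y') t := by
  have := HasDerivAt.fun_sum (u := Finset.univ) fun i _ =>
    (hasDerivAt_pi.1 hx i).mul (hasDerivAt_pi.1 hy i)
  rwa [Finset.sum_add_distrib] at this

theorem HasDerivAt.mulVec (A : Matrix m n 𝕜) (hy : HasDerivAt y y' t) :
    HasDerivAt (fun s => A *ᵥ y s) (A *ᵥ y') t :=
  hasDerivAt_pi.2 fun i =>
    HasDerivAt.fun_sum fun j _ => (hasDerivAt_pi.1 hy j).const_mul (A i j)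

theorem HasDerivAt.dotProduct_mulVec_self {A : Matrix n n 𝕜} (hA : A.IsSymm)
    (hx : HasDerivAt x x' t) :
    HasDerivAt (fun s => x s ⬝ᵥ A *ᵥ x s) (2 * (x t ⬝ᵥ A *ᵥ x')) t := by
  refine (hx.dotProduct (hx.mulVec A)).congr_deriv ?_
  rw [hA.dotProduct_mulVec_comm x' (x t), two_mul]

end Calculus

/-- Energy identity for the semi-discrete matrix system with source:
if `M_v v'(t) = R p(t)` and `M_p p'(t) = f(t) − Rᵀ v(t)` with symmetric mass
matrices, then the discrete energy `vᵀ M_v v + pᵀ M_p p` has derivative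
`2 p(t)ᵀ f(t)` at `t`. -/
theorem stmt_10
    (M : ℕ) (Mv Mp R : Matrix (Fin M) (Fin M) ℝ)
    (hMv : Mv.IsSymm) (hMp : Mp.IsSymm)
    (f : ℝ → Fin M → ℝ) (v p : ℝ → Fin M → ℝ) (t : ℝ) (v' p' : Fin M → ℝ)
    (hv : HasDerivAt v v' t) (hp : HasDerivAt p p' t)
    (h1 : Mv.mulVec v' = R.mulVec (p t))
    (h2 : Mp.mulVec p' = f t - Rᵀ.mulVec (v t)) :
    HasDerivAt (fun s => v s ⬝ᵥ Mv.mulVec (v s) + p s ⬝ᵥ Mp.mulVec (p s))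
      (2 * (p t ⬝ᵥ f t)) t := by
  refine ((hv.dotProduct_mulVec_self hMv).add (hp.dotProduct_mulVec_self hMp)).congr_deriv ?_
  rw [h1, h2, dotProduct_sub, dotProduct_transpose_mulVec]
  ring
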